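/- In the Suzy–Billy model M: ButFor(M, (G = 1)) = {G} (there is no nontrivial but-for cause of the bottle shattering), S ∈ HP(M, (G = 1)), and B is a preempted cause of (G = 1) with respect to HP, i.e., B is a putative cause of (G = 1) in M with respect to HP but B ∉ HP(M, (G = 1)). -/

import Mathlib

/-!
With Billy's rock in flight, `H_B = 1 - H_S`, so `G = max H_S (1 - H_S) = 1` whatever happens to
Suzy's throw: no single intervention on `S` or `H_S` saves the bottle, and interventions on `B`
or `H_B` leave Suzy's hit in place. Hence the only but-for cause is `G` itself.

HP catches `S` and `H_S` with the contingency `H_B = 0`, the actual value of `H_B`. Conversely,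
an AC2 witness must change one of `S`, `H_S`, `G`, since otherwise Suzy's hit still shatters the
bottle; each of these alone already satisfies AC1–AC2, so minimality forces every complex cause
to be one of the singletons `{S}`, `{H_S}`, `{G}`, and `B` is not an HP cause. It is a putative
one: `H_S` is an HP cause, so setting `H_S = 0` is admissible, and in that model Billy's throw is
a but-for cause.
-/

namespace HPFramework

open Classical

/-- A causal model in the Halpern–Pearl framework, over exogenous variables `U`,
endogenous variables `V` and value domain `D`.  It packages the causal structure
(the finite ranges of the variables), the DAG (the well-founded `parent` relation),
the structural equations `F` (each depending only on the exogenous variables and the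
parents, and taking values in the range), and the context `ctx`. -/
structure CausalModel (U V D : Type) [Fintype U] [Fintype V] where
  rangeU : U → Finset D
  range : V → Finset D
  rangeU_nonempty : ∀ W, (rangeU W).Nonempty
  range_nonempty : ∀ X, (range X).Nonempty
  parent : V → V → Prop
  acyclic : WellFounded parent
  F : V → (U → D) → (V → D) → D
  F_parents : ∀ X u (a b : V → D), (∀ Y, parent Y X → a Y = b Y) → F X u a = F X u b
  F_range : ∀ X u v, (∀ W, u W ∈ rangeU W) → (∀ Y, v Y ∈ range Y) → F X u v ∈ range X
  ctx : U → D
  ctx_range : ∀ W, ctx W ∈ rangeU W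

variable {U V D : Type} [Fintype U] [Fintype V]

/-- The unique solution `S_M` of the system of structural equations of `M`. -/
noncomputable def sol (M : CausalModel U V D) : V → D :=
  WellFounded.fix M.acyclic fun X ih =>
    M.F X M.ctx fun Y => if h : M.parent Y X then ih Y h else (M.range_nonempty Y).choose

/-- A partial, range-permitted assignment of values to the endogenous variables of `M`. -/
def PAssign (M : CausalModel U V D) : Type :=
  {g : V → Option D // ∀ X d, g X = some d → d ∈ M.range X}

/-- The intervened model `M_[X⃗ ← x⃗]`: the equation of each variable assigned a value
by `g` is replaced by the corresponding constant; other equations are unchanged. -/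
noncomputable def intervene (M : CausalModel U V D) (g : PAssign M) : CausalModel U V D where
  rangeU := M.rangeU
  range := M.range
  rangeU_nonempty := M.rangeU_nonempty
  range_nonempty := M.range_nonempty
  parent := M.parent
  acyclic := M.acyclic
  F := fun X u v => (g.1 X).getD (M.F X u v)
  F_parents := by
    intro X u a b hab
    cases h : g.1 X with
    | none => simp only [h, Option.getD_none]; exact M.F_parents X u a b hab
    | some d => simp [h]
  F_range := by
    intro X u v hu hv
    cases h : g.1 X with
    | none => simpa [h] using M.F_range X u v hu hv
    | some d => simpa [h] using g.2 X d h
  ctx := M.ctx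
  ctx_range := M.ctx_range

/-- Basic formulas: Boolean combinations of atoms `(X = x)` with `X` endogenous. -/
inductive BForm (V D : Type) : Type where
  | atom : V → D → BForm V D
  | not : BForm V D → BForm V D
  | and : BForm V D → BForm V D → BForm V D

/-- Evaluation of a basic formula at an assignment of values to the endogenous variables. -/
def BForm.eval (s : V → D) : BForm V D → Prop
  | .atom X x => s X = x
  | .not φ => ¬ φ.eval s
  | .and φ ψ => φ.eval s ∧ ψ.eval s

/-- `M ⊨ φ` for a basic formula `φ`, evaluated via the solution `S_M`. -/
def Sat (M : CausalModel U V D) (φ : BForm V D) : Prop := (BForm.eval (sol M)) φ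

variable [DecidableEq V]

/-- The single intervention `[X ← x]` (with `x` in the range of `X`). -/
noncomputable def single (M : CausalModel U V D) (X : V) (x : D)
    (hx : x ∈ M.range X) : PAssign M :=
  ⟨fun Y => if Y = X then some x else none, by
    intro Y d h
    simp only at h
    split at h
    next heq => cases h; exact heq ▸ hx
    next => cases h⟩

/-- The but-for theory: `X ∈ ButFor(M,φ)` iff `M ⊨ φ` and there is `x ∈ R(X)` with
`M ⊨ [X ← x] ¬φ`. -/
noncomputable def ButFor (M : CausalModel U V D) (φ : BForm V D) : Set V :=
  {X | Sat M φ ∧ ∃ x, ∃ hx : x ∈ M.range X, ¬ Sat (intervene M (single M X x hx)) φ}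

/-- `ℳ(A)` (relative to `M`): all models obtained from `M` by a (possibly partial)
range-permitted assignment to the variables in `A`, while any assigned variable outside
`A` is held fixed at its actual value in `M`. -/
def MSet (M : CausalModel U V D) (A : Set V) : Set (CausalModel U V D) :=
  {M' | ∃ g : PAssign M,
    (∀ X, X ∉ A → ∀ d, g.1 X = some d → d = sol M X) ∧ M' = intervene M g}

/-- A causal theory: a map assigning to every model and basic formula a set of
endogenous variables (the causes). -/
def CausalTheory (U V D : Type) [Fintype U] [Fintype V] : Type _ :=
  CausalModel U V D → BForm V D → Set V

/-- `X` is a putative cause of `φ` in `M` (w.r.t. the theory `C`). -/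
noncomputable def Putative (C : CausalTheory U V D) (M : CausalModel U V D)
    (φ : BForm V D) (X : V) : Prop :=
  ∃ M' ∈ MSet M (C M φ), sol M X = sol M' X ∧ X ∈ ButFor M' φ

/-- `X` is a preempted cause of `φ` in `M` (w.r.t. `C`): putative but not a cause. -/
noncomputable def Preempted (C : CausalTheory U V D) (M : CausalModel U V D)
    (φ : BForm V D) (X : V) : Prop :=
  Putative C M φ X ∧ X ∉ C M φ

/-- A theory is similarity-based if it recognises at least all but-for causes and at
most all putative causes. -/
noncomputable def SimilarityBased (C : CausalTheory U V D) : Prop :=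
  ∀ M φ, ButFor M φ ⊆ C M φ ∧ ∀ X ∈ C M φ, Putative C M φ X

/-- The principle of presumption. -/
noncomputable def Presumption (C : CausalTheory U V D) : Prop :=
  ∀ M φ X, Preempted C M φ X →
    ∀ M' ∈ MSet M (C M φ), sol M' X = sol M X → X ∈ ButFor M' φ →
      ∃ W, W ∉ C M φ ∧ sol M W ≠ sol M' W

/-- Empirical causal theories (fixed-point characterisation). -/
noncomputable def Empirical (C : CausalTheory U V D) : Prop :=
  ∀ M φ X, X ∈ C M φ ↔
    ∃ M' ∈ MSet M (C M φ), sol M X = sol M' X ∧ X ∈ ButFor M' φ ∧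
      ∀ W, W ∉ C M φ → sol M W = sol M' W

/-- The relation `M₁ ⊑_{C,φ} M₂`. -/
noncomputable def CRel (C : CausalTheory U V D) (φ : BForm V D)
    (M₁ M₂ : CausalModel U V D) : Prop :=
  M₂ ∈ MSet M₁ (C M₁ φ) ∧ Sat M₂ φ ∧ ∀ X, X ∉ C M₁ φ → sol M₁ X = sol M₂ X

/-- The closure property. -/
noncomputable def Closure (C : CausalTheory U V D) : Prop :=
  ∀ (M : CausalModel U V D) (φ : BForm V D) M', CRel C φ M M' → C M' φ ⊆ C M φ

/-- AC1 and AC2 of Halpern's (2015) definition, for the set `Xs`: `M ⊨ φ` and there is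
an intervention assigning (range-permitted) values to all of `Xs` and holding any other
assigned variable fixed at its actual value, after which `¬φ` holds. -/
noncomputable def AC12 (M : CausalModel U V D) (φ : BForm V D) (Xs : Set V) : Prop :=
  Sat M φ ∧ ∃ g : PAssign M,
    (∀ X ∈ Xs, (g.1 X).isSome) ∧
    (∀ X, X ∉ Xs → ∀ d, g.1 X = some d → d = sol M X) ∧
    ¬ Sat (intervene M g) φ

/-- `Xs` is a complex cause of `φ` in `M`: AC1, AC2 and the minimality condition AC3. -/
noncomputable def ComplexCause (M : CausalModel U V D) (φ : BForm V D) (Xs : Set V) : Prop :=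
  AC12 M φ Xs ∧ ∀ Ys : Set V, Ys ⊂ Xs → ¬ AC12 M φ Ys

/-- The HP theory: `X ∈ HP(M,φ)` iff `X` belongs to some complex cause of `φ` in `M`. -/
noncomputable def HP : CausalTheory U V D := fun M φ =>
  {X | ∃ Xs : Set V, X ∈ Xs ∧ ComplexCause M φ Xs}

/-- Helper: a relation admitting a strictly monotone rank function is well-founded. -/
theorem wf_of_rank {α : Type} (r : α → α → Prop) (rk : α → ℕ)
    (h : ∀ a b, r a b → rk a < rk b) : WellFounded r :=
  Subrelation.wf (fun {a b} hr => h a b hr) (InvImage.wf rk Nat.lt_wfRel.wf)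



/-- The endogenous variables of the Suzy–Billy model. -/
inductive SVar : Type
  | S | B | HS | HB | G
deriving DecidableEq

instance : Fintype SVar :=
  ⟨{SVar.S, SVar.B, SVar.HS, SVar.HB, SVar.G}, by intro x; cases x <;> simp⟩

open SVar

/-- The Suzy–Billy model: all variables binary; equations `S = U₁`, `B = U₂`,
`H_S = S`, `H_B = B - H_S` (truncated subtraction on `{0,1}`), `G = max {H_S, H_B}`;
context `u = (1,1)`. -/
noncomputable def MSB : CausalModel (Fin 2) SVar ℕ where
  rangeU := fun _ => {0, 1}
  range := fun _ => {0, 1}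
  rangeU_nonempty := fun _ => ⟨0, by simp⟩
  range_nonempty := fun _ => ⟨0, by simp⟩
  parent := fun Y X =>
    (Y = S ∧ X = HS) ∨ ((Y = B ∨ Y = HS) ∧ X = HB) ∨ ((Y = HS ∨ Y = HB) ∧ X = G)
  acyclic := wf_of_rank _
    (fun X => match X with | S => 0 | B => 0 | HS => 1 | HB => 2 | G => 3)
    (by
      rintro a b (⟨rfl, rfl⟩ | ⟨h, rfl⟩ | ⟨h, rfl⟩)
      · simp
      · rcases h with rfl | rfl <;> simp
      · rcases h with rfl | rfl <;> simp)
  F := fun X u v => match X with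
    | S => u 0
    | B => u 1
    | HS => v S
    | HB => v B - v HS
    | G => max (v HS) (v HB)
  F_parents := by
    intro X u a b hab
    cases X with
    | S => rfl
    | B => rfl
    | HS => exact hab S (by simp)
    | HB =>
      show a B - a HS = b B - b HS
      rw [hab B (by simp), hab HS (by simp)]
    | G =>
      show max (a HS) (a HB) = max (b HS) (b HB)
      rw [hab HS (by simp), hab HB (by simp)]
  F_range := by
    intro X u v hu hv
    cases X with
    | S => exact hu 0
    | B => exact hu 1
    | HS => exact hv S
    | HB =>
      have h1 := hv B
      have h2 := hv HS
      show v B - v HS ∈ ({0, 1} : Finset ℕ)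
      simp only [Finset.mem_insert, Finset.mem_singleton] at *
      omega
    | G =>
      have h1 := hv HS
      have h2 := hv HB
      show max (v HS) (v HB) ∈ ({0, 1} : Finset ℕ)
      simp only [Finset.mem_insert, Finset.mem_singleton] at *
      omega
  ctx := fun _ => 1
  ctx_range := fun _ => by simp

/-- The basic formula `(G = 1)`. -/
noncomputable def φG : BForm SVar ℕ := .atom G 1

end HPFramework

namespace HPFramework

open SVar

section General

variable {U V D : Type} [Fintype U] [Fintype V]

theorem sol_eq_F (M : CausalModel U V D) (X : V) : sol M X = M.F X M.ctx (sol M) := by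
  rw [sol, WellFounded.fix_eq]
  exact M.F_parents X M.ctx _ _ fun Y hY => dif_pos hY

theorem sol_mem_range (M : CausalModel U V D) (X : V) : sol M X ∈ M.range X := by
  induction X using WellFounded.induction M.acyclic with
  | _ X ih =>
    rw [sol, WellFounded.fix_eq]
    refine M.F_range X M.ctx _ M.ctx_range fun Y => ?_
    split_ifs with h
    · exact ih Y h
    · exact (M.range_nonempty Y).choose_spec

theorem sol_intervene (M : CausalModel U V D) (g : PAssign M) (X : V) :
    sol (intervene M g) X = (g.1 X).getD (M.F X M.ctx (sol (intervene M g))) :=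
  sol_eq_F (intervene M g) X

theorem sol_intervene_of_forall_eq_sol (M : CausalModel U V D) (g : PAssign M)
    (hg : ∀ X d, g.1 X = some d → d = sol M X) : sol (intervene M g) = sol M := by
  funext X
  induction X using WellFounded.induction M.acyclic with
  | _ X ih =>
    rw [sol_intervene]
    cases hX : g.1 X with
    | some d => exact hg X d hX
    | none => rw [Option.getD_none, M.F_parents X M.ctx _ (sol M) ih, ← sol_eq_F]

def PAssign.or {M : CausalModel U V D} (g g' : PAssign M) : PAssign M :=
  ⟨fun X => (g.1 X).or (g'.1 X), fun X d h => by
    cases hX : g.1 X with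
    | some d' => simp only [hX, Option.some_or, Option.some.injEq] at h; exact h ▸ g.2 X d' hX
    | none => simp only [hX, Option.none_or] at h; exact g'.2 X d h⟩

@[simp] theorem PAssign.or_apply {M : CausalModel U V D} (g g' : PAssign M) (X : V) :
    (g.or g').1 X = (g.1 X).or (g'.1 X) := rfl

theorem not_AC12_empty (M : CausalModel U V D) (φ : BForm V D) : ¬ AC12 M φ ∅ := by
  rintro ⟨hφ, g, -, hg, hnφ⟩
  rw [Sat, sol_intervene_of_forall_eq_sol M g fun X => hg X (Set.notMem_empty X)] at hnφ
  exact hnφ hφ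

theorem complexCause_singleton_iff (M : CausalModel U V D) (φ : BForm V D) (X : V) :
    ComplexCause M φ {X} ↔ AC12 M φ {X} := by
  refine ⟨And.left, fun h => ⟨h, fun Ys hYs => ?_⟩⟩
  rw [Set.ssubset_singleton_iff.mp hYs]
  exact not_AC12_empty M φ

theorem ComplexCause.eq_of_subset {M : CausalModel U V D} {φ : BForm V D} {Xs Ys : Set V}
    (hXs : ComplexCause M φ Xs) (hYs : AC12 M φ Ys) (hsub : Ys ⊆ Xs) : Ys = Xs := by
  by_contra hne
  exact hXs.2 Ys (hsub.ssubset_of_ne hne) hYs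

@[simp] theorem single_apply [DecidableEq V] (M : CausalModel U V D) (X : V) (x : D)
    (hx : x ∈ M.range X) (Y : V) : (single M X x hx).1 Y = if Y = X then some x else none :=
  rfl

theorem intervene_intervene_single [DecidableEq V] (M : CausalModel U V D) (g : PAssign M)
    (X : V) (x : D) (hx : x ∈ M.range X) :
    intervene (intervene M g) (single (intervene M g) X x hx) =
      intervene M ((single M X x hx).or g) := by
  simp only [intervene, PAssign.or, single, Option.getD_or]

theorem AC12_singleton_of_mem_ButFor [DecidableEq V] {M : CausalModel U V D}
    {φ : BForm V D} {X : V} (hX : X ∈ ButFor M φ) : AC12 M φ {X} := by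
  obtain ⟨hφ, x, hx, hnφ⟩ := hX
  refine ⟨hφ, single M X x hx, fun Y hY => ?_, fun Y hY d hd => ?_, hnφ⟩
  · simp [Set.mem_singleton_iff.mp hY]
  · simp only [single_apply, Option.ite_none_right_eq_some] at hd
    exact absurd hd.1 hY

theorem ButFor_subset_HP [DecidableEq V] (M : CausalModel U V D) (φ : BForm V D) :
    ButFor M φ ⊆ HP M φ := fun X hX =>
  ⟨{X}, rfl, (complexCause_singleton_iff M φ X).mpr (AC12_singleton_of_mem_ButFor hX)⟩

end General

section SuzyBilly

theorem zero_mem_range_MSB (X : SVar) : 0 ∈ MSB.range X := by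
  simp [MSB]

theorem sat_φG (M : CausalModel (Fin 2) SVar ℕ) : Sat M φG ↔ sol M G = 1 := Iff.rfl

@[simp] theorem sol_MSB_S : sol MSB S = 1 := sol_eq_F MSB S
@[simp] theorem sol_MSB_B : sol MSB B = 1 := sol_eq_F MSB B
@[simp] theorem sol_MSB_HS : sol MSB HS = 1 := (sol_eq_F MSB HS).trans sol_MSB_S
@[simp] theorem sol_MSB_HB : sol MSB HB = 0 := by
  rw [sol_eq_F]
  exact congrArg₂ (· - ·) sol_MSB_B sol_MSB_HS
@[simp] theorem sol_MSB_G : sol MSB G = 1 := by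
  rw [sol_eq_F]
  exact congrArg₂ max sol_MSB_HS sol_MSB_HB

section Intervened

variable (g : PAssign MSB)

@[simp] theorem sol_intervene_MSB_S : sol (intervene MSB g) S = (g.1 S).getD 1 :=
  sol_intervene MSB g S

@[simp] theorem sol_intervene_MSB_B : sol (intervene MSB g) B = (g.1 B).getD 1 :=
  sol_intervene MSB g B

@[simp] theorem sol_intervene_MSB_HS :
    sol (intervene MSB g) HS = (g.1 HS).getD (sol (intervene MSB g) S) :=
  sol_intervene MSB g HS

@[simp] theorem sol_intervene_MSB_HB :
    sol (intervene MSB g) HB =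
      (g.1 HB).getD (sol (intervene MSB g) B - sol (intervene MSB g) HS) :=
  sol_intervene MSB g HB

@[simp] theorem sol_intervene_MSB_G :
    sol (intervene MSB g) G =
      (g.1 G).getD (max (sol (intervene MSB g) HS) (sol (intervene MSB g) HB)) :=
  sol_intervene MSB g G

theorem sol_intervene_MSB_le_one (X : SVar) : sol (intervene MSB g) X ≤ 1 := by
  have h := sol_mem_range (intervene MSB g) X
  change sol (intervene MSB g) X ∈ ({0, 1} : Finset ℕ) at h
  simp only [Finset.mem_insert, Finset.mem_singleton] at h
  omega

theorem sol_intervene_MSB_G_of_B_HB_G_eq_none (hB : g.1 B = none) (hHB : g.1 HB = none)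
    (hG : g.1 G = none) : sol (intervene MSB g) G = 1 := by
  have hHS := sol_intervene_MSB_le_one g HS
  simp only [sol_intervene_MSB_G, sol_intervene_MSB_HB, sol_intervene_MSB_B, hB, hHB, hG,
    Option.getD_none] at hHS ⊢
  omega

theorem sol_intervene_MSB_G_of_fixes_S_HS_G
    (hg : ∀ X, X = S ∨ X = HS ∨ X = G → ∀ d, g.1 X = some d → d = sol MSB X) :
    sol (intervene MSB g) G = 1 := by
  have hS : sol (intervene MSB g) S = 1 := by
    cases h : g.1 S with
    | none => simp [h]
    | some d => simpa [h] using hg S (by simp) d h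
  have hHS : sol (intervene MSB g) HS = 1 := by
    cases h : g.1 HS with
    | none => simp [h, hS]
    | some d => simpa [h] using hg HS (by simp) d h
  cases h : g.1 G with
  | none =>
    have hHB := sol_intervene_MSB_le_one g HB
    simp only [sol_intervene_MSB_G, h, hHS, Option.getD_none]
    omega
  | some d => simpa [h] using hg G (by simp) d h

end Intervened

theorem not_AC12_MSB_of_notMem {Xs : Set SVar} (hS : S ∉ Xs) (hHS : HS ∉ Xs) (hG : G ∉ Xs) :
    ¬ AC12 MSB φG Xs := by
  rintro ⟨-, g, -, hg, hnφ⟩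
  refine hnφ (sol_intervene_MSB_G_of_fixes_S_HS_G g fun X hX => hg X ?_)
  rcases hX with rfl | rfl | rfl <;> assumption

noncomputable def zeroAt (X : SVar) : PAssign MSB := single MSB X 0 (zero_mem_range_MSB X)

@[simp] theorem zeroAt_apply (X Y : SVar) : (zeroAt X).1 Y = if Y = X then some 0 else none :=
  rfl

theorem AC12_MSB_singleton_of_S_or_HS {X : SVar} (hX : X = S ∨ X = HS) :
    AC12 MSB φG {X} := by
  refine ⟨sol_MSB_G, (zeroAt X).or (zeroAt HB), ?_, fun Y hY d hd => ?_, ?_⟩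
  · rintro Y rfl
    simp
  · have hYX : Y ≠ X := hY
    simp only [PAssign.or_apply, zeroAt_apply, hYX, if_false, Option.none_or,
      Option.ite_none_right_eq_some, Option.some.injEq] at hd
    obtain ⟨rfl, rfl⟩ := hd
    exact sol_MSB_HB.symm
  · rw [sat_φG]
    rcases hX with rfl | rfl <;> simp

theorem G_mem_ButFor_MSB : G ∈ ButFor MSB φG :=
  ⟨sol_MSB_G, 0, zero_mem_range_MSB G, by simp [sat_φG]⟩

theorem AC12_MSB_singleton {X : SVar} (hX : X ∈ ({S, HS, G} : Set SVar)) :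
    AC12 MSB φG {X} := by
  rcases hX with rfl | rfl | rfl
  · exact AC12_MSB_singleton_of_S_or_HS (Or.inl rfl)
  · exact AC12_MSB_singleton_of_S_or_HS (Or.inr rfl)
  · exact AC12_singleton_of_mem_ButFor G_mem_ButFor_MSB

theorem HP_MSB : HP MSB φG = {S, HS, G} := by
  ext X
  refine ⟨fun ⟨Xs, hX, hXs⟩ => ?_, fun hX =>
    ⟨{X}, rfl, (complexCause_singleton_iff MSB φG X).mpr (AC12_MSB_singleton hX)⟩⟩
  obtain ⟨Y, hY, hYXs⟩ : ∃ Y ∈ ({S, HS, G} : Set SVar), Y ∈ Xs := by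
    by_contra! h
    exact not_AC12_MSB_of_notMem (h S (by simp)) (h HS (by simp)) (h G (by simp)) hXs.1
  rw [← hXs.eq_of_subset (AC12_MSB_singleton hY) (Set.singleton_subset_iff.mpr hYXs),
    Set.mem_singleton_iff] at hX
  rwa [hX]

theorem ButFor_MSB : ButFor MSB φG = {G} := by
  refine Set.Subset.antisymm (fun X hX => ?_) (Set.singleton_subset_iff.mpr G_mem_ButFor_MSB)
  have hHP := ButFor_subset_HP MSB φG hX
  obtain ⟨-, x, hx, hnφ⟩ := hX
  rw [HP_MSB] at hHP
  rcases hHP with rfl | rfl | rfl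
  · exact absurd (sol_intervene_MSB_G_of_B_HB_G_eq_none _ (by simp) (by simp) (by simp)) hnφ
  · exact absurd (sol_intervene_MSB_G_of_B_HB_G_eq_none _ (by simp) (by simp) (by simp)) hnφ
  · rfl

theorem putative_HP_MSB_B : Putative HP MSB φG B := by
  have hHS : HS ∈ HP MSB φG := by simp [HP_MSB]
  refine ⟨intervene MSB (zeroAt HS), ⟨zeroAt HS, fun X hX d hd => ?_, rfl⟩, by simp, ?_, 0,
    zero_mem_range_MSB B, ?_⟩
  · simp only [zeroAt_apply, Option.ite_none_right_eq_some] at hd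
    exact absurd (hd.1 ▸ hHS) hX
  · exact sol_intervene_MSB_G_of_B_HB_G_eq_none _ (by simp) (by simp) (by simp)
  · rw [sat_φG, intervene_intervene_single]
    simp

end SuzyBilly

/-- in the Suzy–Billy model, `ButFor(M,(G=1)) = {G}`, `S` is an HP cause
of `(G = 1)`, and `B` is a preempted cause of `(G = 1)` w.r.t. HP (putative but not an
HP cause). -/
theorem suzy_billy :
    ButFor MSB φG = ({G} : Set SVar) ∧
    S ∈ HP MSB φG ∧
    Preempted HP MSB φG B :=
  ⟨ButFor_MSB, by simp [HP_MSB], putative_HP_MSB_B, by simp [HP_MSB]⟩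

end HPFramework
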